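/- arXiv:1001.5073 — 3 statements merged into one kernel-verified Lean document; each statement's English description precedes it below -/
import Mathlib

section
/- Let A be a real n×m matrix with n < m satisfying the URP, and let 1 ≤ n0 ≤ n. Then γ_A(n0) + 1 ≤ ‖A‖₂² / (min over nonempty index sets I ⊆ {1,…,m} with |I| ≤ n0 of σ_min(A_I)²), where ‖A‖₂ denotes the spectral norm (largest singular value) of A and σ_min(A_I) the smallest singular value of the column submatrix A_I. -/
open Finset
open scoped BigOperators

noncomputable section

/-- Squared Euclidean norm of a vector. -/
def nsq {ι : Type*} [Fintype ι] (s : ι → ℝ) : ℝ := ∑ i, (s i) ^ 2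

/-- The Unique Representation Property: every `n × n` submatrix of `A` is invertible. -/
def URP {n m : ℕ} (A : Matrix (Fin n) (Fin m) ℝ) : Prop :=
  ∀ g : Fin n → Fin m, Function.Injective g → IsUnit (A.submatrix id g)

/-- Number of nonzero components (the ℓ⁰ "norm"). -/
def l0 {ι : Type*} [Fintype ι] (s : ι → ℝ) : ℕ :=
  (Finset.univ.filter fun i => s i ≠ 0).card

/-- Number of components with absolute value greater than σ. -/
def l0s {ι : Type*} [Fintype ι] (s : ι → ℝ) (σ : ℝ) : ℕ :=
  (Finset.univ.filter fun i => σ < |s i|).card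

/-- The set of ratios ‖π_I(s)‖²/‖π_{Iᶜ}(s)‖² over index sets `I` with `|I| ≤ n0`
and nonzero null-space vectors `s`. -/
def gammaSet {n m : ℕ} (A : Matrix (Fin n) (Fin m) ℝ) (n0 : ℕ) : Set ℝ :=
  {r | ∃ (I : Finset (Fin m)) (s : Fin m → ℝ), I.card ≤ n0 ∧ A.mulVec s = 0 ∧ s ≠ 0 ∧
    r = (∑ i ∈ I, (s i) ^ 2) / (∑ i ∈ Iᶜ, (s i) ^ 2)}

/-- γ_A(n0), the supremum of the above set of ratios. -/
def gammaA {n m : ℕ} (A : Matrix (Fin n) (Fin m) ℝ) (n0 : ℕ) : ℝ :=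
  sSup (gammaSet A n0)

/-- Square of the largest singular value of a matrix (Rayleigh quotient form). -/
def sMaxSq {p q : Type*} [Fintype p] [Fintype q] (B : Matrix p q ℝ) : ℝ :=
  sSup {r | ∃ v : q → ℝ, nsq v = 1 ∧ r = nsq (B.mulVec v)}

/-- Square of the smallest singular value of a matrix with at least as many rows as
columns (Rayleigh quotient form). -/
def sMinSq {p q : Type*} [Fintype p] [Fintype q] (B : Matrix p q ℝ) : ℝ :=
  sInf {r | ∃ v : q → ℝ, nsq v = 1 ∧ r = nsq (B.mulVec v)}

/-- The quadratic spline f_γ. -/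
def fsp (γ u : ℝ) : ℝ :=
  if |u| ≤ 1 then 1 - u ^ 2 / (1 + γ)
  else if |u| ≤ 1 + γ then (|u| - γ - 1) ^ 2 / (γ ^ 2 + γ)
  else 0

/-- F_{γ,σ}(s) = Σ_i f_γ(s_i/σ). -/
def Fsp {m : ℕ} (γ σ : ℝ) (s : Fin m → ℝ) : ℝ := ∑ i, fsp γ (s i / σ)

/-- The piecewise second derivative g_γ of f_γ. -/
def gsp (γ u : ℝ) : ℝ :=
  if |u| ≤ 1 then -2 / (1 + γ)
  else if |u| ≤ 1 + γ then 2 / (γ ^ 2 + γ)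
  else 0

/-- The derivative f_γ′. -/
def fspDeriv (γ u : ℝ) : ℝ :=
  if |u| ≤ 1 then -2 * u / (1 + γ)
  else if |u| ≤ 1 + γ then 2 * (|u| - γ - 1) / (γ ^ 2 + γ) * Real.sign u
  else 0

/-- The gradient of F_{γ,σ}: its i-th component is (1/σ)·f_γ′(s_i/σ). -/
def gradF {m : ℕ} (γ σ : ℝ) (s : Fin m → ℝ) : Fin m → ℝ :=
  fun i => fspDeriv γ (s i / σ) / σ

/-- The lower asymmetric restricted isometry constant δ_k^{min} of `A`. -/
def aricMin {n m : ℕ} (A : Matrix (Fin n) (Fin m) ℝ) (k : ℕ) : ℝ :=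
  sInf {δ : ℝ | 0 ≤ δ ∧ ∀ s : Fin m → ℝ, l0 s ≤ k → (1 - δ) * nsq s ≤ nsq (A.mulVec s)}

end

/-!
Let `A *ᵥ s = 0`, let `u` be the part of `s` on `I` and put `a = ‖u‖²`, `b = ‖s - u‖²`.
The vector `v = (a + b) • u - a • s` satisfies `A v = (a + b) • A u` and `‖v‖² = a b (a + b)`.
With `D` the minimum of `σ_min(A_J)²` over `|J| ≤ n0` (positive by the URP), comparing
`D a ≤ ‖A u‖²` with `‖A v‖² ≤ ‖A‖₂² ‖v‖²` gives `D (a + b) ≤ ‖A‖₂² b`, i.e. `a / b + 1 ≤ ‖A‖₂² / D`.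
-/

open Matrix

section Rayleigh

variable {ι p q : Type*} [Fintype ι] [Fintype p] [Fintype q]

lemma nsq_nonneg (s : ι → ℝ) : 0 ≤ nsq s :=
  Finset.sum_nonneg fun _ _ => sq_nonneg _

@[simp]
lemma nsq_zero : nsq (0 : ι → ℝ) = 0 := by
  simp [nsq]

lemma nsq_smul (c : ℝ) (s : ι → ℝ) : nsq (c • s) = c ^ 2 * nsq s := by
  simp [nsq, Finset.mul_sum, mul_pow]

lemma nsq_eq_zero_iff {s : ι → ℝ} : nsq s = 0 ↔ s = 0 := by
  simp [nsq, Finset.sum_eq_zero_iff_of_nonneg fun i _ => sq_nonneg (s i), funext_iff]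

lemma nsq_eq_sum_add_sum_compl [DecidableEq ι] (I : Finset ι) (s : ι → ℝ) :
    nsq s = ∑ i ∈ I, s i ^ 2 + ∑ i ∈ Iᶜ, s i ^ 2 :=
  (Finset.sum_add_sum_compl I _).symm

lemma nsq_single [DecidableEq ι] (j : ι) : nsq (Pi.single j 1 : ι → ℝ) = 1 := by
  simp [nsq, Pi.single_apply]

lemma exists_sq_mul_nsq_eq_one {s : ι → ℝ} (hs : s ≠ 0) : ∃ c : ℝ, c ^ 2 * nsq s = 1 := by
  have hpos : 0 < nsq s := (nsq_nonneg s).lt_of_ne' (nsq_eq_zero_iff.not.2 hs)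
  exact ⟨(Real.sqrt (nsq s))⁻¹, by rw [inv_pow, Real.sq_sqrt hpos.le, inv_mul_cancel₀ hpos.ne']⟩

lemma nsq_mulVec_le_frobenius (B : Matrix p q ℝ) (v : q → ℝ) :
    nsq (B *ᵥ v) ≤ (∑ i, ∑ j, B i j ^ 2) * nsq v := by
  rw [Finset.sum_mul]
  exact Finset.sum_le_sum fun i _ => Finset.sum_mul_sq_le_sq_mul_sq univ (B i) v

lemma bddAbove_sMaxSq_set (B : Matrix p q ℝ) :
    BddAbove {r | ∃ v : q → ℝ, nsq v = 1 ∧ r = nsq (B *ᵥ v)} := by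
  refine ⟨∑ i, ∑ j, B i j ^ 2, ?_⟩
  rintro r ⟨v, hv, rfl⟩
  simpa [hv] using nsq_mulVec_le_frobenius B v

lemma nsq_mulVec_le_sMaxSq_mul (B : Matrix p q ℝ) (v : q → ℝ) :
    nsq (B *ᵥ v) ≤ sMaxSq B * nsq v := by
  rcases eq_or_ne v 0 with rfl | hv
  · simp
  obtain ⟨c, hc⟩ := exists_sq_mul_nsq_eq_one hv
  have hle : c ^ 2 * nsq (B *ᵥ v) ≤ sMaxSq B := by
    rw [← nsq_smul, ← mulVec_smul]
    exact le_csSup (bddAbove_sMaxSq_set B) ⟨c • v, by rw [nsq_smul, hc], rfl⟩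
  calc nsq (B *ᵥ v) = c ^ 2 * nsq (B *ᵥ v) * nsq v := by
        linear_combination (-nsq (B *ᵥ v)) * hc
    _ ≤ sMaxSq B * nsq v := mul_le_mul_of_nonneg_right hle (nsq_nonneg v)

lemma sMinSq_mul_nsq_le (B : Matrix p q ℝ) (v : q → ℝ) :
    sMinSq B * nsq v ≤ nsq (B *ᵥ v) := by
  rcases eq_or_ne v 0 with rfl | hv
  · simp
  obtain ⟨c, hc⟩ := exists_sq_mul_nsq_eq_one hv
  have hle : sMinSq B ≤ c ^ 2 * nsq (B *ᵥ v) := by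
    rw [← nsq_smul, ← mulVec_smul]
    exact csInf_le ⟨0, by rintro r ⟨w, -, rfl⟩; exact nsq_nonneg _⟩
      ⟨c • v, by rw [nsq_smul, hc], rfl⟩
  calc sMinSq B * nsq v ≤ c ^ 2 * nsq (B *ᵥ v) * nsq v :=
        mul_le_mul_of_nonneg_right hle (nsq_nonneg v)
    _ = nsq (B *ᵥ v) := by linear_combination nsq (B *ᵥ v) * hc

lemma sMinSq_nonneg (B : Matrix p q ℝ) : 0 ≤ sMinSq B :=
  Real.sInf_nonneg <| by rintro r ⟨v, -, rfl⟩; exact nsq_nonneg _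

lemma isCompact_nsq_eq_one : IsCompact {v : q → ℝ | nsq v = 1} := by
  refine (isCompact_closedBall (0 : q → ℝ) 1).of_isClosed_subset
    (isClosed_eq (by unfold nsq; fun_prop) continuous_const) fun v hv => ?_
  rw [mem_closedBall_zero_iff, pi_norm_le_iff_of_nonneg zero_le_one]
  intro i
  rw [Real.norm_eq_abs, ← sq_le_one_iff_abs_le_one, ← (hv : nsq v = 1)]
  exact Finset.single_le_sum (fun j _ => sq_nonneg (v j)) (mem_univ i)

/-- The infimum is attained on the compact unit sphere. -/
lemma sMinSq_pos [Nonempty q] {B : Matrix p q ℝ} (hB : Function.Injective B.mulVec) :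
    0 < sMinSq B := by
  classical
  obtain ⟨v₀, hv₀, hmin⟩ := isCompact_nsq_eq_one.exists_isMinOn
    ⟨_, nsq_single (Classical.arbitrary q)⟩ (by unfold nsq; fun_prop : Continuous
      fun v : q → ℝ => nsq (B *ᵥ v)).continuousOn
  have hv₀ne : v₀ ≠ 0 := by rintro rfl; simp at hv₀
  have hpos : 0 < nsq (B *ᵥ v₀) :=
    (nsq_nonneg _).lt_of_ne' fun h => hv₀ne (hB (by rw [nsq_eq_zero_iff.1 h, mulVec_zero]))
  refine hpos.trans_le (le_csInf ⟨_, v₀, hv₀, rfl⟩ ?_)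
  rintro r ⟨v, hv, rfl⟩
  exact hmin hv

end Rayleigh

section ColumnSubmatrix

variable {ι p : Type*} [Fintype ι]

lemma l0_le_card_of_support {I : Finset ι} {s : ι → ℝ} (hsI : ∀ j ∉ I, s j = 0) :
    l0 s ≤ I.card :=
  Finset.card_le_card fun j hj => by_contra fun h => (Finset.mem_filter.1 hj).2 (hsI j h)

lemma submatrix_val_mulVec_of_support (A : Matrix p ι ℝ) {I : Finset ι} {s : ι → ℝ}
    (hsI : ∀ j ∉ I, s j = 0) :
    A.submatrix id ((↑) : I → ι) *ᵥ (fun j : I => s j) = A *ᵥ s := by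
  ext i
  simp only [mulVec, dotProduct, submatrix_apply, id]
  rw [Finset.sum_coe_sort I fun j => A i j * s j]
  exact Finset.sum_subset (subset_univ I) fun j _ hj => by rw [hsI j hj, mul_zero]

lemma nsq_restrict_of_support [DecidableEq ι] {I : Finset ι} {s : ι → ℝ}
    (hsI : ∀ j ∉ I, s j = 0) : nsq (fun j : I => s j) = nsq s := by
  rw [nsq, Finset.sum_coe_sort I fun j => s j ^ 2, nsq_eq_sum_add_sum_compl I s,
    Finset.sum_eq_zero (s := Iᶜ) fun j hj => by simp [hsI j (mem_compl.1 hj)], add_zero]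

lemma sMinSq_submatrix_mul_nsq_le [Fintype p] [DecidableEq ι] (A : Matrix p ι ℝ)
    {I : Finset ι} {s : ι → ℝ} (hsI : ∀ j ∉ I, s j = 0) :
    sMinSq (A.submatrix id ((↑) : I → ι)) * nsq s ≤ nsq (A *ᵥ s) := by
  simpa only [nsq_restrict_of_support hsI, submatrix_val_mulVec_of_support A hsI] using
    sMinSq_mul_nsq_le (A.submatrix id ((↑) : I → ι)) (fun j : I => s j)

end ColumnSubmatrix

namespace URP

variable {n m : ℕ} {A : Matrix (Fin n) (Fin m) ℝ}

/-- Enlarge `I` to a set `J` of exactly `n` columns; the `n × n` submatrix on `J` is invertible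
by the URP, and it maps the restriction of `s` to `A *ᵥ s`. -/
lemma eq_zero_of_mulVec_eq_zero (hA : URP A) (hnm : n ≤ m) {I : Finset (Fin m)}
    (hI : I.card ≤ n) {s : Fin m → ℝ} (hsI : ∀ j ∉ I, s j = 0) (hs : A *ᵥ s = 0) : s = 0 := by
  obtain ⟨J, hIJ, hJ⟩ := Finset.exists_superset_card_eq hI (by simpa using hnm)
  set e : Fin n ≃ J := (Finset.equivFinOfCardEq hJ).symm
  have hsJ : ∀ j ∉ J, s j = 0 := fun j hj => hsI j fun hjI => hj (hIJ hjI)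
  have hsub : A.submatrix id (fun k => (e k : Fin m)) *ᵥ (fun k => s (e k)) = 0 := by
    rw [← hs, ← submatrix_val_mulVec_of_support A hsJ]
    ext i
    exact e.sum_comp fun j : J => A i j * s j
  have hse : (fun k => s (e k)) = 0 :=
    mulVec_injective_iff_isUnit.2 (hA _ fun a b h => e.injective (Subtype.ext h))
      (by rw [hsub, mulVec_zero])
  ext j
  by_cases hj : j ∈ J
  · simpa using congrFun hse (e.symm ⟨j, hj⟩)
  · exact hsJ j hj

lemma injective_submatrix_mulVec (hA : URP A) (hnm : n ≤ m) {I : Finset (Fin m)}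
    (hI : I.card ≤ n) : Function.Injective (A.submatrix id ((↑) : I → Fin m)).mulVec := by
  intro v w hvw
  set s : Fin m → ℝ := Function.extend Subtype.val (v - w) 0
  have hs_val : (fun j : I => s j) = v - w :=
    funext fun j => Subtype.val_injective.extend_apply (v - w) 0 j
  have hsI : ∀ j ∉ I, s j = 0 := fun j hj =>
    Function.extend_apply' _ _ j fun ⟨k, hk⟩ => hj (hk ▸ k.2)
  have hs : A *ᵥ s = 0 := by
    rw [← submatrix_val_mulVec_of_support A hsI, hs_val, mulVec_sub, hvw, sub_self]
  rw [← sub_eq_zero, ← hs_val, hA.eq_zero_of_mulVec_eq_zero hnm hI hsI hs]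
  rfl

lemma sMinSq_submatrix_pos (hA : URP A) (hnm : n ≤ m) {I : Finset (Fin m)} (hIne : I.Nonempty)
    (hI : I.card ≤ n) : 0 < sMinSq (A.submatrix id ((↑) : I → Fin m)) :=
  have : Nonempty I := hIne.to_subtype
  sMinSq_pos (hA.injective_submatrix_mulVec hnm hI)

end URP

section NullSpace

variable {ι p : Type*} [Fintype ι] [Fintype p] [DecidableEq ι]

lemma nsq_ite_mem (I : Finset ι) (s : ι → ℝ) :
    nsq (fun j => if j ∈ I then s j else 0) = ∑ i ∈ I, s i ^ 2 := by
  simp [nsq, ite_pow, Finset.sum_ite_mem]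

lemma le_sMaxSq_of_forall_l0_le [Nonempty ι] {A : Matrix p ι ℝ} {k : ℕ} (hk : 1 ≤ k) {D : ℝ}
    (hD : ∀ u, l0 u ≤ k → D * nsq u ≤ nsq (A *ᵥ u)) : D ≤ sMaxSq A := by
  let j := Classical.arbitrary ι
  have hj : l0 (Pi.single j 1 : ι → ℝ) ≤ k :=
    (l0_le_card_of_support (I := {j}) fun i hi => by simp_all).trans (by simpa using hk)
  simpa [nsq_single] using (hD _ hj).trans (nsq_mulVec_le_sMaxSq_mul A _)

lemma mul_add_le_sMaxSq_mul_of_mulVec_eq_zero {A : Matrix p ι ℝ} {s : ι → ℝ}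
    (hs : A *ᵥ s = 0) (I : Finset ι) {D : ℝ} (hDM : D ≤ sMaxSq A)
    (hD : D * ∑ i ∈ I, s i ^ 2 ≤ nsq (A *ᵥ fun j => if j ∈ I then s j else 0)) :
    D * (∑ i ∈ I, s i ^ 2 + ∑ i ∈ Iᶜ, s i ^ 2) ≤ sMaxSq A * ∑ i ∈ Iᶜ, s i ^ 2 := by
  set a := ∑ i ∈ I, s i ^ 2
  set b := ∑ i ∈ Iᶜ, s i ^ 2
  set u : ι → ℝ := fun j => if j ∈ I then s j else 0
  have hb : 0 ≤ b := Finset.sum_nonneg fun _ _ => sq_nonneg _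
  rcases (Finset.sum_nonneg fun i _ => sq_nonneg (s i) : 0 ≤ a).eq_or_lt with ha | ha
  · rw [show a = 0 from ha.symm, zero_add]
    exact mul_le_mul_of_nonneg_right hDM hb
  set v := (a + b) • u - a • s
  have hAv : A *ᵥ v = (a + b) • (A *ᵥ u) := by
    simp only [v, mulVec_sub, mulVec_smul, hs, smul_zero, sub_zero]
  have hv : nsq v = a * b * (a + b) := by
    have hvI : ∑ i ∈ I, v i ^ 2 = b ^ 2 * a := by
      rw [Finset.mul_sum]
      exact Finset.sum_congr rfl fun i hi => by simp [v, u, hi]; ring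
    have hvIc : ∑ i ∈ Iᶜ, v i ^ 2 = a ^ 2 * b := by
      rw [Finset.mul_sum]
      exact Finset.sum_congr rfl fun i hi => by simp [v, u, mem_compl.1 hi]; ring
    rw [nsq_eq_sum_add_sum_compl I v, hvI, hvIc]
    ring
  have hbound : (a + b) ^ 2 * (D * a) ≤ sMaxSq A * (a * b * (a + b)) :=
    calc (a + b) ^ 2 * (D * a) ≤ (a + b) ^ 2 * nsq (A *ᵥ u) :=
          mul_le_mul_of_nonneg_left hD (sq_nonneg _)
      _ = nsq (A *ᵥ v) := by rw [hAv, nsq_smul]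
      _ ≤ sMaxSq A * nsq v := nsq_mulVec_le_sMaxSq_mul A v
      _ = sMaxSq A * (a * b * (a + b)) := by rw [hv]
  refine le_of_mul_le_mul_right ?_ (by positivity : 0 < a * (a + b))
  linear_combination hbound

end NullSpace

lemma div_add_one_le_div_of_mul_add_le {a b D M : ℝ} (hD : 0 < D) (hDM : D ≤ M) (hb : 0 ≤ b)
    (h : D * (a + b) ≤ M * b) : a / b + 1 ≤ M / D := by
  rcases hb.eq_or_lt with rfl | hb
  · simpa [one_le_div hD] using hDM
  · rw [div_add_one hb.ne', div_le_div_iff₀ hb hD]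
    linarith

lemma gammaA_add_one_le {n m : ℕ} [Nonempty (Fin m)] {A : Matrix (Fin n) (Fin m) ℝ} {n0 : ℕ}
    (hn0 : 1 ≤ n0) {D : ℝ} (hD0 : 0 < D) (hD : ∀ u, l0 u ≤ n0 → D * nsq u ≤ nsq (A *ᵥ u)) :
    gammaA A n0 + 1 ≤ sMaxSq A / D := by
  have hDM := le_sMaxSq_of_forall_l0_le hn0 hD
  suffices gammaA A n0 ≤ sMaxSq A / D - 1 by linarith
  refine Real.sSup_le ?_ (by rw [sub_nonneg, one_le_div hD0]; exact hDM)
  rintro r ⟨I, s, hI, hs, -, rfl⟩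
  have hDI := hD (fun j => if j ∈ I then s j else 0)
    ((l0_le_card_of_support fun j hj => if_neg hj).trans hI)
  rw [nsq_ite_mem] at hDI
  have := div_add_one_le_div_of_mul_add_le hD0 hDM (Finset.sum_nonneg fun i _ => sq_nonneg (s i))
    (mul_add_le_sMaxSq_mul_of_mulVec_eq_zero hs I hDM hDI)
  linarith

noncomputable def minSMinSqSubmatrix {p ι : Type*} [Fintype p] (A : Matrix p ι ℝ) (k : ℕ) : ℝ :=
  sInf {r : ℝ | ∃ I : Finset ι, I.Nonempty ∧ I.card ≤ k ∧
    r = sMinSq (A.submatrix id (fun j : {x // x ∈ I} => (j : ι)))}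

lemma minSMinSqSubmatrix_mul_nsq_le {p ι : Type*} [Fintype p] [Fintype ι] [DecidableEq ι]
    (A : Matrix p ι ℝ) {k : ℕ} {u : ι → ℝ} (hu : l0 u ≤ k) :
    minSMinSqSubmatrix A k * nsq u ≤ nsq (A *ᵥ u) := by
  set I := Finset.univ.filter fun i => u i ≠ 0
  have huI : ∀ j ∉ I, u j = 0 := by simp [I]
  rcases I.eq_empty_or_nonempty with hI | hI
  · obtain rfl : u = 0 := funext fun j => huI j (by simp [hI])
    simp
  calc minSMinSqSubmatrix A k * nsq u
      ≤ sMinSq (A.submatrix id ((↑) : I → ι)) * nsq u :=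
        mul_le_mul_of_nonneg_right
          (csInf_le ⟨0, by rintro r ⟨J, -, -, rfl⟩; exact sMinSq_nonneg _⟩ ⟨I, hI, hu, rfl⟩)
          (nsq_nonneg u)
    _ ≤ nsq (A *ᵥ u) := sMinSq_submatrix_mul_nsq_le A huI

lemma URP.minSMinSqSubmatrix_pos {n m : ℕ} {A : Matrix (Fin n) (Fin m) ℝ} (hA : URP A)
    (hnm : n ≤ m) {k : ℕ} (hk1 : 1 ≤ k) (hkn : k ≤ n) : 0 < minSMinSqSubmatrix A k := by
  set S := {r : ℝ | ∃ I : Finset (Fin m), I.Nonempty ∧ I.card ≤ k ∧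
    r = sMinSq (A.submatrix id (fun j : {x // x ∈ I} => (j : Fin m)))}
  have hS : S.Nonempty := ⟨_, {⟨0, by omega⟩}, singleton_nonempty _, by simpa using hk1, rfl⟩
  have hSfin : S.Finite := (Set.finite_range fun I : Finset (Fin m) =>
      sMinSq (A.submatrix id ((↑) : I → Fin m))).subset fun r ⟨I, _, _, hr⟩ => ⟨I, hr.symm⟩
  obtain ⟨I, hIne, hIk, hmin⟩ := hS.csInf_mem hSfin
  rw [minSMinSqSubmatrix, hmin]
  exact hA.sMinSq_submatrix_pos hnm hIne (hIk.trans hkn)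

/-- γ_A(n0) + 1 ≤ ‖A‖₂² / min over nonempty `I` with `|I| ≤ n0` of σ_min(A_I)². -/
theorem stmt_1 {n m : ℕ} (hnm : n < m) (A : Matrix (Fin n) (Fin m) ℝ)
    (hURP : URP A) (n0 : ℕ) (hn1 : 1 ≤ n0) (hn0 : n0 ≤ n) :
    gammaA A n0 + 1 ≤
      sMaxSq A /
        sInf {r : ℝ | ∃ I : Finset (Fin m), I.Nonempty ∧ I.card ≤ n0 ∧
          r = sMinSq (A.submatrix id (fun j : {x // x ∈ I} => (j : Fin m)))} := by
  have : NeZero m := ⟨by omega⟩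
  exact gammaA_add_one_le hn1 (hURP.minSMinSqSubmatrix_pos hnm.le hn1 hn0)
    fun u hu => minSMinSqSubmatrix_mul_nsq_le A hu
end

section
/- Let A be a real n×m matrix with n < m satisfying the URP, let 1 ≤ n0 ≤ n, let γ = γ_A(n0) (assumed finite and positive), and let σ > 0. If s ∈ ℝ^m satisfies ‖s‖_{0,σ} ≤ n0 (at most n0 components of s have absolute value greater than σ), then for every w ∈ ℝ^m with A w = 0 one has Σ_{i=1}^m g_γ(s_i/σ)·w_i² ≤ 0; that is, the Hessian of F_{γ,σ} restricted to the affine solution set {s : A s = x} is negative semi-definite at s. -/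
open Finset
open scoped BigOperators

/-!
Off the set `I` of the at most `n0` large components of `s`, the weights `g_γ(s_i/σ)` equal
`-2/(1+γ)`; on `I` they are at most `2/(γ²+γ)`. For a null-space vector `w` the definition of
`γ_A(n0)` gives `‖π_I w‖² ≤ γ ‖π_{Iᶜ} w‖²`, and since `γ · 2/(γ²+γ) = 2/(1+γ)` the two parts
balance. The URP is what makes the ratio meaningful: a nonzero null-space vector cannot be
supported on at most `n` coordinates, so `‖π_{Iᶜ} w‖² > 0`.
-/

open Matrix

variable {n m : ℕ} {A : Matrix (Fin n) (Fin m) ℝ}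

theorem URP.eq_zero_of_mulVec_eq_zero_s5 (hA : URP A) (hnm : n ≤ m) {I : Finset (Fin m)}
    (hI : #I ≤ n) {w : Fin m → ℝ} (hw : A *ᵥ w = 0) (hwI : ∀ i ∉ I, w i = 0) : w = 0 := by
  obtain ⟨J, hIJ, hJ⟩ := Finset.exists_superset_card_eq hI (by simpa using hnm)
  set g := J.orderEmbOfFin hJ
  have hw_off : ∀ j ∉ Set.range g, w j = 0 := fun j hj =>
    hwI j fun hjI => hj (by simpa [g] using hIJ hjI)
  have hsub : A.submatrix id g *ᵥ (w ∘ g) = 0 := by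
    ext i
    rw [← congrFun hw i]
    exact Fintype.sum_of_injective g g.injective _ _ (fun j hj => by simp [hw_off j hj])
      (fun _ => rfl)
  have hwg_zero : w ∘ g = 0 :=
    mulVec_injective_of_isUnit (hA g g.injective) (by rw [hsub, mulVec_zero])
  funext j
  by_cases hj : j ∈ Set.range g
  · obtain ⟨k, rfl⟩ := hj
    exact congrFun hwg_zero k
  · exact hw_off j hj

theorem sum_sq_le_gammaA_mul_sum_sq_compl (hA : URP A) (hnm : n ≤ m) {n0 : ℕ} (hn0 : n0 ≤ n)
    (hbdd : BddAbove (gammaSet A n0)) {I : Finset (Fin m)} (hI : #I ≤ n0) {w : Fin m → ℝ}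
    (hw : A *ᵥ w = 0) : ∑ i ∈ I, w i ^ 2 ≤ gammaA A n0 * ∑ i ∈ Iᶜ, w i ^ 2 := by
  by_cases hw0 : w = 0
  · simp [hw0]
  have hcompl : 0 < ∑ i ∈ Iᶜ, w i ^ 2 := by
    refine (sum_nonneg fun i _ => sq_nonneg (w i)).lt_of_ne fun h => hw0 ?_
    refine hA.eq_zero_of_mulVec_eq_zero_s5 hnm (hI.trans hn0) hw fun i hi => ?_
    exact pow_eq_zero_iff two_ne_zero |>.1 <|
      (sum_eq_zero_iff_of_nonneg fun i _ => sq_nonneg (w i)).1 h.symm i (mem_compl.2 hi)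
  exact (div_le_iff₀ hcompl).1 (le_csSup hbdd ⟨I, w, hI, hw, hw0, rfl⟩)

theorem gsp_le {γ : ℝ} (hγ : 0 < γ) (u : ℝ) : gsp γ u ≤ 2 / (γ ^ 2 + γ) := by
  have hpos : 0 ≤ 2 / (γ ^ 2 + γ) := by positivity
  unfold gsp
  split_ifs
  · exact (div_nonpos_of_nonpos_of_nonneg (by norm_num) (by linarith)).trans hpos
  · exact le_rfl
  · exact hpos

theorem gsp_of_abs_le_one (γ : ℝ) {u : ℝ} (hu : |u| ≤ 1) : gsp γ u = -2 / (1 + γ) :=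
  if_pos hu

theorem stmt_5_general {n m : ℕ} (hnm : n < m) (A : Matrix (Fin n) (Fin m) ℝ)
    (hURP : URP A) (n0 : ℕ) (hn0 : n0 ≤ n)
    (γ : ℝ) (hγ : γ = gammaA A n0) (hγpos : 0 < γ) (hbdd : BddAbove (gammaSet A n0))
    (σ : ℝ) (hσ : 0 < σ) (s : Fin m → ℝ) (hs : l0s s σ ≤ n0) :
    ∀ w : Fin m → ℝ, A.mulVec w = 0 → ∑ i, gsp γ (s i / σ) * (w i) ^ 2 ≤ 0 := by
  intro w hw
  set I := univ.filter fun i => σ < |s i|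
  have hsmall : ∀ i ∈ Iᶜ, gsp γ (s i / σ) = -2 / (1 + γ) := fun i hi => by
    refine gsp_of_abs_le_one γ ?_
    rw [abs_div, abs_of_pos hσ, div_le_one hσ]
    simpa [I] using hi
  have hratio := sum_sq_le_gammaA_mul_sum_sq_compl hURP hnm.le hn0 hbdd hs hw
  rw [← hγ] at hratio
  calc ∑ i, gsp γ (s i / σ) * w i ^ 2
      = ∑ i ∈ I, gsp γ (s i / σ) * w i ^ 2 + ∑ i ∈ Iᶜ, gsp γ (s i / σ) * w i ^ 2 :=
        (sum_add_sum_compl I _).symm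
    _ ≤ 2 / (γ ^ 2 + γ) * ∑ i ∈ I, w i ^ 2 + -2 / (1 + γ) * ∑ i ∈ Iᶜ, w i ^ 2 := by
        rw [mul_sum, mul_sum]
        refine add_le_add (sum_le_sum fun i _ => ?_) (sum_congr rfl fun i hi => ?_).le
        · exact mul_le_mul_of_nonneg_right (gsp_le hγpos _) (sq_nonneg _)
        · rw [hsmall i hi]
    _ = 2 / (γ ^ 2 + γ) * (∑ i ∈ I, w i ^ 2 - γ * ∑ i ∈ Iᶜ, w i ^ 2) := by
        field_simp
        ring
    _ ≤ 0 := mul_nonpos_of_nonneg_of_nonpos (by positivity) (by linarith)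

/-- if at most n0 components of s exceed σ in absolute value, the Hessian of
F_{γ,σ} restricted to the affine solution set is negative semi-definite at s. -/
theorem stmt_5 {n m : ℕ} (hnm : n < m) (A : Matrix (Fin n) (Fin m) ℝ)
    (hURP : URP A) (n0 : ℕ) (hn1 : 1 ≤ n0) (hn0 : n0 ≤ n)
    (γ : ℝ) (hγ : γ = gammaA A n0) (hγpos : 0 < γ) (hbdd : BddAbove (gammaSet A n0))
    (σ : ℝ) (hσ : 0 < σ) (s : Fin m → ℝ) (hs : l0s s σ ≤ n0) :
    ∀ w : Fin m → ℝ, A.mulVec w = 0 → ∑ i, gsp γ (s i / σ) * (w i) ^ 2 ≤ 0 :=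
  stmt_5_general hnm A hURP n0 hn0 γ hγ hγpos hbdd σ hσ s hs
end

section
/- Let A be a real n×m matrix with n < m satisfying the URP, let 1 ≤ n0 ≤ n, let γ = γ_A(n0) (finite and positive), σ > 0, and x ∈ ℝⁿ. Suppose there exists s0 ∈ S_x with k = ‖s0‖₀ ≤ n0/(2+2γ). Let P denote the orthogonal projection of ℝ^m onto the null space of A. If ŝ ∈ S_x satisfies F_{γ,σ}(ŝ) ≥ m − n0/(2+2γ), and α : [0,∞) → ℝ^m is differentiable with α(0) = ŝ and α′(t) = P ∇F_{γ,σ}(α(t)) for all t ≥ 0, then α(t) converges as t → ∞ to a point s* ∈ S_x which is a global maximizer of F_{γ,σ} over S_x, and F_{γ,σ}(s*) ≥ m − k. -/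
open Finset
open scoped BigOperators

/-! On the superlevel set `S = {A s = x, F_{γ,σ}(s) ≥ m - n0 / (2 + 2γ)}` every point has at most
`n0 / 2` coordinates outside `[-σ, σ]`. Between two points of `S`, the concavity of `f_γ` on
`[-1, 1]` on the remaining coordinates beats, by the definition of `γ_A(n0)` applied to their
null-space difference, the convexity on the at most `n0` others; hence `F_{γ,σ}` satisfies the
gradient inequality `F z - F s ≤ ⟪∇F s, z - s⟫` on `S`. The set `S` is compact and contains `s0`,
where `F ≥ m - k`, and the flow increases `F`, so it stays in `S`. There the gradient inequality
forces `F ∘ α` up to `sup_S F` (otherwise Cauchy–Schwarz makes it grow linearly), so every cluster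
point `p` of `α` is a maximizer, and it makes `|α t - p|` nonincreasing, so `α → p`. -/

open Filter Topology Matrix

section Spline

variable {γ : ℝ}

lemma fsp_neg (u : ℝ) : fsp γ (-u) = fsp γ u := by
  simp [fsp]

lemma fspDeriv_neg (u : ℝ) : fspDeriv γ (-u) = -fspDeriv γ u := by
  simp only [fspDeriv, abs_neg, Real.sign_neg]
  split_ifs <;> ring

lemma fsp_of_abs_le_one {u : ℝ} (h : |u| ≤ 1) : fsp γ u = 1 - u ^ 2 / (1 + γ) := by
  simp [fsp, h]

lemma fsp_of_one_add_lt_abs (hγ : 0 < γ) {u : ℝ} (h : 1 + γ < |u|) : fsp γ u = 0 := by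
  simp [fsp, show ¬|u| ≤ 1 by linarith, h.not_ge]

lemma fsp_nonneg (hγ : 0 < γ) (u : ℝ) : 0 ≤ fsp γ u := by
  unfold fsp
  split_ifs with h1
  · rw [sub_nonneg, div_le_one (by linarith), ← sq_abs]
    nlinarith [abs_nonneg u]
  · positivity
  · rfl

lemma fsp_le_one (hγ : 0 < γ) (u : ℝ) : fsp γ u ≤ 1 := by
  unfold fsp
  split_ifs with h1 h2
  · linarith [show 0 ≤ u ^ 2 / (1 + γ) by positivity]
  · rw [div_le_one (by positivity)]
    nlinarith
  · exact zero_le_one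

lemma fsp_le_of_one_lt_abs (hγ : 0 < γ) {u : ℝ} (h : 1 < |u|) : fsp γ u ≤ γ / (1 + γ) := by
  unfold fsp
  split_ifs with h1 h2
  · exact absurd h1 h.not_ge
  · rw [div_le_div_iff₀ (by positivity) (by positivity)]
    nlinarith [mul_nonneg (sub_nonneg.2 h.le) (sub_nonneg.2 h2)]
  · positivity

lemma fsp_eqOn_Icc_neg_one_one :
    Set.EqOn (fsp γ) (fun u => 1 - u ^ 2 / (1 + γ)) (Set.Icc (-1) 1) :=
  fun _ hu => fsp_of_abs_le_one (abs_le.2 hu)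

lemma fsp_eqOn_Icc_one (hγ : 0 < γ) :
    Set.EqOn (fsp γ) (fun u => (u - γ - 1) ^ 2 / (γ ^ 2 + γ)) (Set.Icc 1 (1 + γ)) := by
  intro u ⟨hu1, hu2⟩
  rcases hu1.eq_or_lt with rfl | hu1
  · rw [fsp_of_abs_le_one (by norm_num)]
    field_simp
    ring
  · simp [fsp, abs_of_pos (show 0 < u by linarith), hu1.not_ge, hu2]

lemma fsp_eqOn_Ici (hγ : 0 < γ) : Set.EqOn (fsp γ) (fun _ => 0) (Set.Ici (1 + γ)) := by
  intro u hu
  rcases (show 1 + γ ≤ u from hu).eq_or_lt with rfl | hu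
  · simpa using fsp_eqOn_Icc_one hγ (Set.right_mem_Icc.2 (by linarith))
  · exact fsp_of_one_add_lt_abs hγ (by rwa [abs_of_pos (by linarith)])

/-- On each of the five pieces, `fspDeriv γ` is `2 / (γ ^ 2 + γ)` times a function of slope at
most `1`. -/
lemma fspDeriv_cases (hγ : 0 < γ) (u : ℝ) :
    (u ≤ -(1 + γ) ∧ fspDeriv γ u = 2 / (γ ^ 2 + γ) * 0) ∨
    (-(1 + γ) ≤ u ∧ u ≤ -1 ∧ fspDeriv γ u = 2 / (γ ^ 2 + γ) * (u + γ + 1)) ∨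
    (-1 ≤ u ∧ u ≤ 1 ∧ fspDeriv γ u = 2 / (γ ^ 2 + γ) * (-(γ * u))) ∨
    (1 ≤ u ∧ u ≤ 1 + γ ∧ fspDeriv γ u = 2 / (γ ^ 2 + γ) * (u - γ - 1)) ∨
    (1 + γ ≤ u ∧ fspDeriv γ u = 2 / (γ ^ 2 + γ) * 0) := by
  unfold fspDeriv
  split_ifs with h1 h2
  · refine Or.inr (Or.inr (Or.inl ⟨(abs_le.1 h1).1, (abs_le.1 h1).2, ?_⟩))
    field_simp
    ring
  · rcases lt_or_gt_of_ne (show u ≠ 0 by rintro rfl; simp at h1) with hu | hu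
    · rw [abs_of_neg hu] at h1 h2 ⊢
      rw [Real.sign_of_neg hu]
      refine Or.inr (Or.inl ⟨by linarith, by linarith, ?_⟩)
      ring
    · rw [abs_of_pos hu] at h1 h2 ⊢
      rw [Real.sign_of_pos hu]
      refine Or.inr (Or.inr (Or.inr (Or.inl ⟨by linarith, h2, ?_⟩)))
      ring
  · rcases le_or_gt u 0 with hu | hu
    · exact Or.inl ⟨by rw [abs_of_nonpos hu] at h2; linarith, by ring⟩
    · exact Or.inr (Or.inr (Or.inr (Or.inr ⟨by rw [abs_of_pos hu] at h2; linarith, by ring⟩)))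

lemma fspDeriv_sub_le (hγ : 0 < γ) {a b : ℝ} (hab : a ≤ b) :
    fspDeriv γ b - fspDeriv γ a ≤ 2 / (γ ^ 2 + γ) * (b - a) := by
  have hL : 0 ≤ 2 / (γ ^ 2 + γ) := by positivity
  rcases fspDeriv_cases hγ a with ⟨ha, hfa⟩ | ⟨ha, ha', hfa⟩ | ⟨ha, ha', hfa⟩ | ⟨ha, ha', hfa⟩ |
      ⟨ha, hfa⟩ <;>
    rcases fspDeriv_cases hγ b with ⟨hb, hfb⟩ | ⟨hb, hb', hfb⟩ | ⟨hb, hb', hfb⟩ | ⟨hb, hb', hfb⟩ |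
      ⟨hb, hfb⟩ <;>
    rw [hfa, hfb, ← mul_sub] <;>
    exact mul_le_mul_of_nonneg_left (by nlinarith) hL

lemma fspDeriv_eqOn_Icc_neg_one_one :
    Set.EqOn (fspDeriv γ) (fun u => -2 * u / (1 + γ)) (Set.Icc (-1) 1) :=
  fun _ hu => if_pos (abs_le.2 hu)

lemma fspDeriv_eqOn_Icc_one (hγ : 0 < γ) :
    Set.EqOn (fspDeriv γ) (fun u => 2 * (u - γ - 1) / (γ ^ 2 + γ)) (Set.Icc 1 (1 + γ)) := by
  intro u ⟨hu1, hu2⟩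
  rcases hu1.eq_or_lt with rfl | hu1
  · rw [fspDeriv_eqOn_Icc_neg_one_one (by norm_num)]
    field_simp
    ring
  · have hu : 0 < u := by linarith
    simp [fspDeriv, abs_of_pos hu, Real.sign_of_pos hu, hu1.not_ge, hu2]

lemma fspDeriv_eqOn_Ici (hγ : 0 < γ) : Set.EqOn (fspDeriv γ) (fun _ => 0) (Set.Ici (1 + γ)) := by
  intro u hu
  rcases (show 1 + γ ≤ u from hu).eq_or_lt with rfl | hu
  · simpa using fspDeriv_eqOn_Icc_one hγ (Set.right_mem_Icc.2 (by linarith))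
  · simp [fspDeriv, abs_of_pos (show 0 < u by linarith), show ¬u ≤ 1 by linarith, hu.not_ge]

lemma hasDerivWithinAt_of_eqOn {f f' g g' : ℝ → ℝ} {s : Set ℝ} (hs : IsClosed s)
    (hfg : Set.EqOn f g s) (hfg' : Set.EqOn f' g' s) (hg : ∀ u, HasDerivAt g (g' u) u) (u : ℝ) :
    HasDerivWithinAt f (f' u) s u := by
  by_cases hu : u ∈ s
  · rw [hfg' hu]
    exact (hg u).hasDerivWithinAt.congr hfg (hfg hu)
  · exact HasFDerivWithinAt.of_notMem_closure (hs.closure_eq.symm ▸ hu)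

lemma hasDerivAt_fsp_of_neg_one_lt (hγ : 0 < γ) {u : ℝ} (hu : -1 < u) :
    HasDerivAt (fsp γ) (fspDeriv γ u) u := by
  have h₁ : ∀ u, HasDerivAt (fun w => 1 - w ^ 2 / (1 + γ)) (-2 * u / (1 + γ)) u := fun u =>
    (((hasDerivAt_pow 2 u).div_const (1 + γ)).const_sub 1).congr_deriv (by ring)
  have h₂ : ∀ u, HasDerivAt (fun w => (w - γ - 1) ^ 2 / (γ ^ 2 + γ))
      (2 * (u - γ - 1) / (γ ^ 2 + γ)) u := fun u =>
    (((((hasDerivAt_id' u).sub_const γ).sub_const 1).pow 2).div_const _).congr_deriv (by simp)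
  have h := ((hasDerivWithinAt_of_eqOn isClosed_Icc fsp_eqOn_Icc_neg_one_one
    fspDeriv_eqOn_Icc_neg_one_one h₁ u).union (hasDerivWithinAt_of_eqOn isClosed_Icc
    (fsp_eqOn_Icc_one hγ) (fspDeriv_eqOn_Icc_one hγ) h₂ u)).union
    (hasDerivWithinAt_of_eqOn isClosed_Ici (fsp_eqOn_Ici hγ) (fspDeriv_eqOn_Ici hγ)
      (fun u => hasDerivAt_const u 0) u)
  rw [Set.Icc_union_Icc_eq_Icc (by norm_num) (by linarith),
    Set.Icc_union_Ici_eq_Ici (by linarith)] at h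
  exact h.hasDerivAt (Ici_mem_nhds hu)

lemma hasDerivAt_fsp (hγ : 0 < γ) (u : ℝ) : HasDerivAt (fsp γ) (fspDeriv γ u) u := by
  rcases le_total 0 u with hu | hu
  · exact hasDerivAt_fsp_of_neg_one_lt hγ (by linarith)
  · have h := (hasDerivAt_fsp_of_neg_one_lt hγ (by linarith)).comp u (hasDerivAt_neg u)
    rw [show fsp γ ∘ Neg.neg = fsp γ from funext fsp_neg, fspDeriv_neg] at h
    simpa using h

lemma continuous_fsp (hγ : 0 < γ) : Continuous (fsp γ) :=
  continuous_iff_continuousAt.2 fun u => (hasDerivAt_fsp hγ u).continuousAt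

lemma fsp_le_tangent_add (hγ : 0 < γ) (a b : ℝ) :
    fsp γ b ≤ fsp γ a + fspDeriv γ a * (b - a) + (b - a) ^ 2 / (γ ^ 2 + γ) := by
  set h : ℝ → ℝ := fun x => fsp γ x - fspDeriv γ a * (x - a) - (x - a) ^ 2 / (γ ^ 2 + γ)
  have hd : ∀ x, HasDerivAt h (fspDeriv γ x - fspDeriv γ a - 2 / (γ ^ 2 + γ) * (x - a)) x := by
    intro x
    refine (((hasDerivAt_fsp hγ x).sub (((hasDerivAt_id' x).sub_const a).const_mul
      (fspDeriv γ a))).sub ((((hasDerivAt_id' x).sub_const a).pow 2).div_const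
      (γ ^ 2 + γ))).congr_deriv ?_
    field_simp
    ring
  have hcont : Continuous h := continuous_iff_continuousAt.2 fun x => (hd x).continuousAt
  suffices h b ≤ h a by simp [h] at this; linarith
  rcases le_total a b with hab | hab
  · refine antitoneOn_of_hasDerivWithinAt_nonpos (convex_Ici a) hcont.continuousOn
      (fun x _ => (hd x).hasDerivWithinAt) (fun x hx => ?_) Set.self_mem_Ici hab hab
    rw [interior_Ici] at hx
    linarith [fspDeriv_sub_le hγ (le_of_lt hx)]
  · refine monotoneOn_of_hasDerivWithinAt_nonneg (convex_Iic a) hcont.continuousOn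
      (fun x _ => (hd x).hasDerivWithinAt) (fun x hx => ?_) hab Set.self_mem_Iic hab
    rw [interior_Iic] at hx
    linarith [fspDeriv_sub_le hγ (le_of_lt hx)]

lemma fsp_eq_tangent_sub (hγ : 0 < γ) {a b : ℝ} (ha : |a| ≤ 1) (hb : |b| ≤ 1) :
    fsp γ b = fsp γ a + fspDeriv γ a * (b - a) - (b - a) ^ 2 / (1 + γ) := by
  rw [fsp_of_abs_le_one ha, fsp_of_abs_le_one hb, fspDeriv, if_pos ha]
  field_simp
  ring

end Spline

section NullSpace

variable {n m : ℕ}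

lemma URP.eq_zero_of_mulVec_eq_zero_s8 {A : Matrix (Fin n) (Fin m) ℝ} (hA : URP A) (hnm : n ≤ m)
    {v : Fin m → ℝ} (hv : A *ᵥ v = 0) {J : Finset (Fin m)} (hJ : J.card ≤ n)
    (hvJ : ∀ i ∉ J, v i = 0) : v = 0 := by
  obtain ⟨J', hJJ', -, hJ'⟩ := exists_subsuperset_card_eq (subset_univ J) hJ (by simpa using hnm)
  set g := J'.orderEmbOfFin hJ'
  have hvg : ∀ i ∉ Set.range g, v i = 0 := fun i hi =>
    hvJ i fun h => hi (by simpa [g] using hJJ' h)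
  have hsub : A.submatrix id g *ᵥ (v ∘ g) = 0 := by
    rw [← hv]
    ext j
    exact Fintype.sum_of_injective g g.injective _ _ (fun i hi => by simp [hvg i hi]) fun _ => rfl
  have hvg0 : v ∘ g = 0 :=
    Matrix.mulVec_injective_iff_isUnit.2 (hA g g.injective) (by rw [hsub, Matrix.mulVec_zero])
  ext i
  by_cases hi : i ∈ Set.range g
  · obtain ⟨k, rfl⟩ := hi
    exact congrFun hvg0 k
  · exact hvg i hi

/-- `γ` bounds every ratio in `gammaSet A n0`, whose supremum is `γ_A(n0)`. -/
def NullSpaceRatioLE (A : Matrix (Fin n) (Fin m) ℝ) (n0 : ℕ) (γ : ℝ) : Prop :=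
  ∀ I : Finset (Fin m), I.card ≤ n0 → ∀ v, A *ᵥ v = 0 → ∑ i ∈ I, v i ^ 2 ≤ γ * ∑ i ∈ Iᶜ, v i ^ 2

lemma nullSpaceRatioLE_gammaA {A : Matrix (Fin n) (Fin m) ℝ} (hA : URP A) (hnm : n ≤ m)
    {n0 : ℕ} (hn0 : n0 ≤ n) (hbdd : BddAbove (gammaSet A n0)) :
    NullSpaceRatioLE A n0 (gammaA A n0) := by
  intro I hI v hv
  by_cases hv0 : v = 0
  · simp [hv0]
  have hpos : 0 < ∑ i ∈ Iᶜ, v i ^ 2 := by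
    refine (sum_nonneg fun i _ => sq_nonneg _).lt_of_ne fun h => hv0 ?_
    refine hA.eq_zero_of_mulVec_eq_zero_s8 hnm hv (hI.trans hn0) fun i hi => ?_
    exact pow_eq_zero_iff two_ne_zero |>.1 <|
      (sum_eq_zero_iff_of_nonneg fun i _ => sq_nonneg _).1 h.symm i (mem_compl.2 hi)
  rw [← div_le_iff₀ hpos]
  exact le_csSup hbdd ⟨I, v, hI, hv, hv0, rfl⟩

end NullSpace

section Fsp

variable {m : ℕ} {γ σ : ℝ}

lemma continuous_Fsp (hγ : 0 < γ) : Continuous (Fsp γ σ : (Fin m → ℝ) → ℝ) :=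
  continuous_finsetSum _ fun _ _ => (continuous_fsp hγ).comp (by fun_prop)

lemma hasDerivAt_Fsp_comp (hγ : 0 < γ) {α : ℝ → Fin m → ℝ} {v : Fin m → ℝ} {t : ℝ}
    (hα : HasDerivAt α v t) :
    HasDerivAt (fun t => Fsp γ σ (α t)) (gradF γ σ (α t) ⬝ᵥ v) t := by
  have hi (i : Fin m) : HasDerivAt (fun t => fsp γ (α t i / σ)) (gradF γ σ (α t) i * v i) t :=
    ((hasDerivAt_fsp hγ _).comp t ((hasDerivAt_pi.1 hα i).div_const σ)).congr_deriv
      (by simp only [gradF]; ring)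
  simpa [Fsp, dotProduct] using HasDerivAt.fun_sum fun i (_ : i ∈ univ) => hi i

lemma sub_Fsp_eq_sum (s : Fin m → ℝ) : (m : ℝ) - Fsp γ σ s = ∑ i, (1 - fsp γ (s i / σ)) := by
  simp [Fsp, sum_sub_distrib]

lemma sub_l0_le_Fsp (hγ : 0 < γ) (s : Fin m → ℝ) : (m : ℝ) - l0 s ≤ Fsp γ σ s := by
  have hsupp : ∑ i ∈ univ.filter (fun i => s i ≠ 0), (1 - fsp γ (s i / σ)) =
      ∑ i, (1 - fsp γ (s i / σ)) :=
    sum_filter_of_ne fun i _ h hs => h (by simp [hs, fsp])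
  have hle : ∑ i ∈ univ.filter (fun i => s i ≠ 0), (1 - fsp γ (s i / σ)) ≤ l0 s := by
    calc _ ≤ ∑ i ∈ univ.filter (fun i => s i ≠ 0), (1 : ℝ) :=
          sum_le_sum fun i _ => by linarith [fsp_nonneg hγ (s i / σ)]
      _ = l0 s := by simp [l0]
  linarith [sub_Fsp_eq_sum (γ := γ) (σ := σ) s]

lemma card_mul_le_sub_Fsp (hγ : 0 < γ) {s : Fin m → ℝ} {T : Finset (Fin m)} {ε : ℝ}
    (hT : ∀ i ∈ T, ε ≤ 1 - fsp γ (s i / σ)) : T.card * ε ≤ m - Fsp γ σ s := by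
  rw [sub_Fsp_eq_sum]
  calc T.card * ε = ∑ i ∈ T, ε := by simp
    _ ≤ ∑ i ∈ T, (1 - fsp γ (s i / σ)) := sum_le_sum hT
    _ ≤ _ := sum_le_sum_of_subset_of_nonneg (subset_univ T) fun i _ _ =>
      sub_nonneg.2 (fsp_le_one hγ _)

lemma card_filter_lt_abs_le (hγ : 0 < γ) (hσ : 0 < σ) (s : Fin m → ℝ) :
    ((univ.filter fun i => σ < |s i|).card : ℝ) ≤ (1 + γ) * (m - Fsp γ σ s) := by
  rw [← div_le_iff₀' (by linarith), div_eq_mul_one_div]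
  refine card_mul_le_sub_Fsp hγ fun i hi => ?_
  have h1 : 1 < |s i / σ| := by
    rw [abs_div, abs_of_pos hσ, one_lt_div hσ]
    exact (mem_filter.1 hi).2
  have h2 : 1 - γ / (1 + γ) = 1 / (1 + γ) := by field_simp; ring
  linarith [fsp_le_of_one_lt_abs hγ h1]

lemma card_filter_one_add_mul_lt_abs_le (hγ : 0 < γ) (hσ : 0 < σ) (s : Fin m → ℝ) :
    ((univ.filter fun i => (1 + γ) * σ < |s i|).card : ℝ) ≤ m - Fsp γ σ s := by
  rw [← mul_one ((univ.filter _).card : ℝ)]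
  refine card_mul_le_sub_Fsp hγ fun i hi => ?_
  have h1 : 1 + γ < |s i / σ| := by
    rw [abs_div, abs_of_pos hσ, lt_div_iff₀ hσ]
    exact (mem_filter.1 hi).2
  rw [fsp_of_one_add_lt_abs hγ h1, sub_zero]

/-- `F_{γ,σ}` is concave along `s → z` as soon as the coordinates where `s` or `z` leaves
`[-σ, σ]` are at most `n0`: there `f_γ'' ≤ 2 / (γ ^ 2 + γ)`, elsewhere `f_γ'' = -2 / (1 + γ)`,
and the null-space bound makes the second kind win. -/
lemma Fsp_sub_le_gradF_dotProduct {n n0 : ℕ} {A : Matrix (Fin n) (Fin m) ℝ}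
    (hA : NullSpaceRatioLE A n0 γ) (hγ : 0 < γ) (hσ : 0 < σ) {s z : Fin m → ℝ}
    (hsz : A *ᵥ s = A *ᵥ z) (hI : (univ.filter fun i => σ < |s i| ∨ σ < |z i|).card ≤ n0) :
    Fsp γ σ z - Fsp γ σ s ≤ gradF γ σ s ⬝ᵥ (z - s) := by
  set I := univ.filter fun i => σ < |s i| ∨ σ < |z i|
  set e : Fin m → ℝ := fun i => z i / σ - s i / σ
  set T : Fin m → ℝ := fun i => fsp γ (z i / σ) - fsp γ (s i / σ) - fspDeriv γ (s i / σ) * e i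
  have he : A *ᵥ e = 0 := by
    have : e = σ⁻¹ • (z - s) := by ext i; simp [e, div_eq_inv_mul, mul_sub]
    rw [this, mulVec_smul, mulVec_sub, hsz, sub_self, smul_zero]
  have hsum : Fsp γ σ z - Fsp γ σ s - gradF γ σ s ⬝ᵥ (z - s) = ∑ i, T i := by
    simp only [Fsp, dotProduct, ← sum_sub_distrib, T, e, gradF, Pi.sub_apply]
    exact sum_congr rfl fun i _ => by ring
  have hin : ∀ i ∈ I, T i ≤ e i ^ 2 / (γ ^ 2 + γ) := fun i _ => by
    linarith [fsp_le_tangent_add hγ (s i / σ) (z i / σ)]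
  have hout : ∀ i ∈ Iᶜ, T i = -(e i ^ 2 / (1 + γ)) := fun i hi => by
    simp only [I, mem_compl, mem_filter, mem_univ, true_and, not_or, not_lt] at hi
    have hσ1 {u : ℝ} (hu : |u| ≤ σ) : |u / σ| ≤ 1 := by
      rwa [abs_div, abs_of_pos hσ, div_le_one hσ]
    linarith [fsp_eq_tangent_sub hγ (hσ1 hi.1) (hσ1 hi.2)]
  have hnull := hA I hI e he
  have hkey : (∑ i ∈ I, e i ^ 2) / (γ ^ 2 + γ) ≤ (∑ i ∈ Iᶜ, e i ^ 2) / (1 + γ) := by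
    rw [div_le_div_iff₀ (by positivity) (by positivity)]
    nlinarith [mul_le_mul_of_nonneg_right hnull (by positivity : (0 : ℝ) ≤ 1 + γ)]
  have : ∑ i, T i ≤ 0 := by
    rw [← sum_add_sum_compl I]
    calc ∑ i ∈ I, T i + ∑ i ∈ Iᶜ, T i
        ≤ ∑ i ∈ I, e i ^ 2 / (γ ^ 2 + γ) + ∑ i ∈ Iᶜ, -(e i ^ 2 / (1 + γ)) :=
          add_le_add (sum_le_sum hin) (sum_congr rfl hout).le
      _ ≤ 0 := by rw [sum_neg_distrib, ← sum_div, ← sum_div]; linarith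
  linarith

end Fsp

section GradientFlow

variable {ι : Type*} [Fintype ι]

lemma dotProduct_self_nonneg (w : ι → ℝ) : 0 ≤ w ⬝ᵥ w :=
  sum_nonneg fun i _ => mul_self_nonneg (w i)

lemma norm_le_sqrt_dotProduct_self (w : ι → ℝ) : ‖w‖ ≤ √(w ⬝ᵥ w) :=
  (pi_norm_le_iff_of_nonneg (Real.sqrt_nonneg _)).2 fun i => Real.abs_le_sqrt <| by
    simpa [sq, dotProduct] using single_le_sum (fun j _ => mul_self_nonneg (w j)) (mem_univ i)

lemma sq_dotProduct_le (v w : ι → ℝ) : (v ⬝ᵥ w) ^ 2 ≤ (v ⬝ᵥ v) * (w ⬝ᵥ w) := by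
  simpa only [dotProduct, sq] using sum_mul_sq_le_sq_mul_sq univ v w

lemma hasDerivAt_dotProduct_self {β : ℝ → ι → ℝ} {β' : ι → ℝ} {t : ℝ} (h : HasDerivAt β β' t) :
    HasDerivAt (fun t => β t ⬝ᵥ β t) (2 * (β' ⬝ᵥ β t)) t := by
  have hi (i : ι) := (hasDerivAt_pi.1 h i).mul (hasDerivAt_pi.1 h i)
  refine (HasDerivAt.fun_sum fun i (_ : i ∈ univ) => hi i).congr_deriv ?_
  simp only [dotProduct, mul_sum]
  exact sum_congr rfl fun i _ => by ring

lemma tendsto_of_tendsto_dotProduct_self_sub {β : Type*} {l : Filter β} {f : β → ι → ℝ}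
    {p : ι → ℝ} (h : Tendsto (fun b => (f b - p) ⬝ᵥ (f b - p)) l (𝓝 0)) : Tendsto f l (𝓝 p) :=
  tendsto_iff_norm_sub_tendsto_zero.2 <| squeeze_zero (fun _ => norm_nonneg _)
    (fun _ => norm_le_sqrt_dotProduct_self _) (by simpa using h.sqrt)

lemma monotoneOn_Ici_of_hasDerivAt {f f' : ℝ → ℝ} {a : ℝ}
    (hf : ∀ t, a ≤ t → HasDerivAt f (f' t) t) (hf' : ∀ t, a ≤ t → 0 ≤ f' t) :
    MonotoneOn f (Set.Ici a) :=
  monotoneOn_of_hasDerivWithinAt_nonneg (convex_Ici a)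
    (fun t ht => (hf t ht).continuousAt.continuousWithinAt)
    (fun t ht => (hf t (interior_subset ht)).hasDerivWithinAt)
    fun t ht => hf' t (interior_subset ht)

lemma antitoneOn_Ici_of_hasDerivAt {f f' : ℝ → ℝ} {a : ℝ}
    (hf : ∀ t, a ≤ t → HasDerivAt f (f' t) t) (hf' : ∀ t, a ≤ t → f' t ≤ 0) :
    AntitoneOn f (Set.Ici a) :=
  antitoneOn_of_hasDerivWithinAt_nonpos (convex_Ici a)
    (fun t ht => (hf t ht).continuousAt.continuousWithinAt)
    (fun t ht => (hf t (interior_subset ht)).hasDerivWithinAt)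
    fun t ht => hf' t (interior_subset ht)

lemma tendsto_zero_of_antitoneOn_of_tendsto_comp {h : ℝ → ℝ} (hanti : AntitoneOn h (Set.Ici 0))
    (hnn : ∀ t, 0 ≤ t → 0 ≤ h t) {u : ℕ → ℝ} (hu : Tendsto u atTop atTop)
    (hhu : Tendsto (h ∘ u) atTop (𝓝 0)) : Tendsto h atTop (𝓝 0) := by
  refine tendsto_order.2 ⟨fun a ha => ?_, fun a ha => ?_⟩
  · filter_upwards [eventually_ge_atTop 0] with t ht using ha.trans_le (hnn t ht)
  · obtain ⟨j, hj, hj0⟩ := ((tendsto_order.1 hhu).2 a ha |>.and (hu.eventually_ge_atTop 0)).exists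
    filter_upwards [eventually_ge_atTop (u j)] with t ht
    exact (hanti hj0 (hj0.trans ht : (0 : ℝ) ≤ t) ht).trans_lt hj

variable {F : (ι → ℝ) → ℝ} {g : (ι → ℝ) → ι → ℝ} {S : Set (ι → ℝ)} {α v : ℝ → ι → ℝ}

/-- Otherwise Cauchy–Schwarz gives `(F ∘ α)' = |v|² ≥ (F z - b)² / D`, so `F ∘ α` would grow
linearly past `b`. -/
lemma apply_le_of_hasDerivAt_comp {z : ι → ℝ} {b D : ℝ}
    (hgrad : ∀ t, 0 ≤ t → F z - F (α t) ≤ v t ⬝ᵥ (z - α t))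
    (hFα : ∀ t, 0 ≤ t → HasDerivAt (fun t => F (α t)) (v t ⬝ᵥ v t) t)
    (hD : ∀ t, 0 ≤ t → (z - α t) ⬝ᵥ (z - α t) ≤ D) (hb : ∀ t, 0 ≤ t → F (α t) ≤ b) :
    F z ≤ b := by
  by_contra! hzb
  have hD1 : 0 < max D 1 := lt_max_of_lt_right one_pos
  set ε := (F z - b) ^ 2 / max D 1
  have hε : 0 < ε := div_pos (pow_pos (sub_pos.2 hzb) 2) hD1
  have hspeed : ∀ t, 0 ≤ t → ε ≤ v t ⬝ᵥ v t := fun t ht => by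
    rw [div_le_iff₀ hD1]
    calc (F z - b) ^ 2 ≤ (v t ⬝ᵥ (z - α t)) ^ 2 :=
          pow_le_pow_left₀ (sub_pos.2 hzb).le (by linarith [hgrad t ht, hb t ht]) 2
      _ ≤ (v t ⬝ᵥ v t) * ((z - α t) ⬝ᵥ (z - α t)) := sq_dotProduct_le _ _
      _ ≤ (v t ⬝ᵥ v t) * max D 1 := mul_le_mul_of_nonneg_left
          ((hD t ht).trans (le_max_left _ _)) (dotProduct_self_nonneg _)
  have hgrow : MonotoneOn (fun t => F (α t) - ε * t) (Set.Ici 0) :=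
    monotoneOn_Ici_of_hasDerivAt (fun t ht => (hFα t ht).sub ((hasDerivAt_id' t).const_mul ε))
      fun t ht => by linarith [hspeed t ht]
  set T := (b - F (α 0) + 1) / ε
  have hT : 0 ≤ T := div_nonneg (by linarith [hb 0 le_rfl]) hε.le
  have hεT : ε * T = b - F (α 0) + 1 := mul_div_cancel₀ _ hε.ne'
  have := hgrow Set.self_mem_Ici hT hT
  simp only [mul_zero, sub_zero] at this
  linarith [hb T hT]

/-- `hv` says that the velocity `v` is the projection of the gradient `g` onto the directions
in which `S` extends. -/
theorem exists_tendsto_isMaxOn_of_gradient_flow (hS : IsCompact S) (hF : ContinuousOn F S)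
    (hgrad : ∀ s ∈ S, ∀ z ∈ S, F z - F s ≤ g s ⬝ᵥ (z - s))
    (hα : ∀ t, 0 ≤ t → HasDerivAt α (v t) t)
    (hFα : ∀ t, 0 ≤ t → HasDerivAt (fun t => F (α t)) (v t ⬝ᵥ v t) t)
    (hαS : ∀ t, 0 ≤ t → α t ∈ S)
    (hv : ∀ t, 0 ≤ t → ∀ z ∈ S, g (α t) ⬝ᵥ (z - α t) = v t ⬝ᵥ (z - α t)) :
    ∃ p ∈ S, Tendsto α atTop (𝓝 p) ∧ IsMaxOn F S p := by
  have hgrad' : ∀ z ∈ S, ∀ t, 0 ≤ t → F z - F (α t) ≤ v t ⬝ᵥ (z - α t) := fun z hz t ht =>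
    hv t ht z hz ▸ hgrad _ (hαS t ht) z hz
  have hmono : MonotoneOn (fun t => F (α t)) (Set.Ici 0) :=
    monotoneOn_Ici_of_hasDerivAt hFα fun t _ => dotProduct_self_nonneg _
  obtain ⟨p, hpS, φ, hφ, hαφ⟩ := hS.tendsto_subseq fun j => hαS j j.cast_nonneg
  have hu : Tendsto (fun j => (φ j : ℝ)) atTop atTop :=
    tendsto_natCast_atTop_atTop.comp hφ.tendsto_atTop
  have hFp : ∀ t, 0 ≤ t → F (α t) ≤ F p := fun t ht =>
    ge_of_tendsto ((hF p hpS).tendsto.comp (tendsto_nhdsWithin_iff.2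
        ⟨hαφ, Eventually.of_forall fun j => hαS _ (Nat.cast_nonneg _)⟩))
      ((hu.eventually_ge_atTop t).mono fun j hj => hmono ht (ht.trans hj) hj)
  obtain ⟨D, hD⟩ := (hS.prod hS).bddAbove_image
    (f := fun q => (q.1 - q.2) ⬝ᵥ (q.1 - q.2)) (by fun_prop : Continuous _).continuousOn
  have hpmax : IsMaxOn F S p := isMaxOn_iff.2 fun z hz =>
    apply_le_of_hasDerivAt_comp (hgrad' z hz) hFα
      (fun t ht => hD ⟨(z, α t), ⟨hz, hαS t ht⟩, rfl⟩) hFp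
  have hanti : AntitoneOn (fun t => (α t - p) ⬝ᵥ (α t - p)) (Set.Ici 0) :=
    antitoneOn_Ici_of_hasDerivAt (fun t ht => hasDerivAt_dotProduct_self ((hα t ht).sub_const p))
      fun t ht => by
        rw [← neg_sub, dotProduct_neg]
        linarith [hgrad' p hpS t ht, hFp t ht]
  refine ⟨p, hpS, tendsto_of_tendsto_dotProduct_self_sub <|
    tendsto_zero_of_antitoneOn_of_tendsto_comp hanti (fun t _ => dotProduct_self_nonneg _) hu ?_,
    hpmax⟩
  have h := ((by fun_prop : Continuous fun w : ι → ℝ => (w - p) ⬝ᵥ (w - p)).tendsto p).comp hαφ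
  rwa [sub_self, zero_dotProduct] at h

end GradientFlow

lemma mulVec_eq_of_hasDerivAt {κ ι : Type*} [Fintype κ] [Fintype ι] {A : Matrix κ ι ℝ}
    {α v : ℝ → ι → ℝ} (hα : ∀ t, 0 ≤ t → HasDerivAt α (v t) t) (hv : ∀ t, 0 ≤ t → A *ᵥ v t = 0)
    {t : ℝ} (ht : 0 ≤ t) : A *ᵥ α t = A *ᵥ α 0 := by
  have hd : ∀ τ, 0 ≤ τ → HasDerivAt (fun τ => A *ᵥ α τ) 0 τ := fun τ hτ => by
    have h := (Matrix.mulVecLin A).toContinuousLinearMap.hasFDerivAt.comp_hasDerivAt τ (hα τ hτ)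
    simp only [LinearMap.coe_toContinuousLinearMap', Matrix.mulVecLin_apply, hv τ hτ] at h
    exact h
  exact constant_of_has_deriv_right_zero (fun τ hτ => (hd τ hτ.1).continuousAt.continuousWithinAt)
    (fun τ hτ => (hd τ hτ.1).hasDerivWithinAt) t ⟨ht, le_rfl⟩

lemma dotProduct_eq_apply_dotProduct {κ ι : Type*} [Fintype ι] {A : Matrix κ ι ℝ}
    {P : (ι → ℝ) →ₗ[ℝ] ι → ℝ} (hP : ∀ v, A *ᵥ v = 0 → P v = v)
    (hPsymm : ∀ v w, P v ⬝ᵥ w = v ⬝ᵥ P w) (w : ι → ℝ) {q : ι → ℝ} (hq : A *ᵥ q = 0) :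
    w ⬝ᵥ q = P w ⬝ᵥ q := by
  rw [hPsymm, hP q hq]

section SuperlevelSet

variable {n m n0 : ℕ} {A : Matrix (Fin n) (Fin m) ℝ} {γ σ c : ℝ}

lemma dotProduct_sub_self_le (hA : NullSpaceRatioLE A n0 γ) (hγ : 0 < γ) (hσ : 0 < σ)
    {s s0 : Fin m → ℝ} (hs : A *ᵥ s = A *ᵥ s0) (hF : (m : ℝ) - c ≤ Fsp γ σ s)
    (hc : c + l0 s0 ≤ n0) :
    (s - s0) ⬝ᵥ (s - s0) ≤ (1 + γ) * (m * ((1 + γ) * σ) ^ 2) := by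
  set J := (univ.filter fun i => (1 + γ) * σ < |s i|) ∪ univ.filter fun i => s0 i ≠ 0
  have hJ : J.card ≤ n0 := by
    have h1 := card_filter_one_add_mul_lt_abs_le hγ hσ s
    have h2 := card_union_le (univ.filter fun i => (1 + γ) * σ < |s i|)
      (univ.filter fun i => s0 i ≠ 0)
    have : (J.card : ℝ) ≤ n0 := by
      refine (Nat.cast_le.2 h2).trans ?_
      push_cast
      linarith [show ((univ.filter fun i => s0 i ≠ 0).card : ℝ) = l0 s0 from rfl]
    exact_mod_cast this
  set d := s - s0
  have hJc : ∀ i ∈ Jᶜ, d i ^ 2 ≤ ((1 + γ) * σ) ^ 2 := fun i hi => by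
    simp only [J, mem_compl, mem_union, mem_filter, mem_univ, true_and, not_or, not_lt,
      not_not] at hi
    rw [show d i = s i by simp [d, hi.2], ← sq_abs]
    exact pow_le_pow_left₀ (abs_nonneg _) hi.1 2
  have hJcsum : ∑ i ∈ Jᶜ, d i ^ 2 ≤ m * ((1 + γ) * σ) ^ 2 := calc
    _ ≤ ∑ i ∈ Jᶜ, ((1 + γ) * σ) ^ 2 := sum_le_sum hJc
    _ = Jᶜ.card * ((1 + γ) * σ) ^ 2 := by rw [sum_const, nsmul_eq_mul]
    _ ≤ m * ((1 + γ) * σ) ^ 2 := by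
      gcongr
      simpa using card_le_univ Jᶜ
  have hnull := hA J hJ d (by rw [mulVec_sub, hs, sub_self])
  calc d ⬝ᵥ d = ∑ i ∈ J, d i ^ 2 + ∑ i ∈ Jᶜ, d i ^ 2 := by
        rw [sum_add_sum_compl]
        simp [dotProduct, sq]
    _ ≤ (1 + γ) * ∑ i ∈ Jᶜ, d i ^ 2 := by linarith
    _ ≤ _ := by gcongr

lemma isCompact_setOf_mulVec_eq_and_le_Fsp (hA : NullSpaceRatioLE A n0 γ) (hγ : 0 < γ)
    (hσ : 0 < σ) {x : Fin n → ℝ} {s0 : Fin m → ℝ} (hs0 : A *ᵥ s0 = x) (hc : c + l0 s0 ≤ n0) :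
    IsCompact {s : Fin m → ℝ | A *ᵥ s = x ∧ (m : ℝ) - c ≤ Fsp γ σ s} := by
  refine Metric.isCompact_of_isClosed_isBounded ?_ ?_
  · exact (isClosed_eq (by fun_prop) continuous_const).inter
      (isClosed_le continuous_const (continuous_Fsp hγ))
  · refine (Metric.isBounded_closedBall (x := s0)
      (r := √((1 + γ) * (m * ((1 + γ) * σ) ^ 2)))).subset fun s hs => ?_
    rw [Metric.mem_closedBall, dist_eq_norm]
    exact (norm_le_sqrt_dotProduct_self _).trans <| Real.sqrt_le_sqrt <|
      dotProduct_sub_self_le hA hγ hσ (hs.1.trans hs0.symm) hs.2 hc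

/-- On `{m - c ≤ F_{γ,σ}}` at most `(1 + γ) c` coordinates leave `[-σ, σ]`, so two such points
leave it on at most `n0` coordinates together. -/
lemma Fsp_sub_le_gradF_dotProduct_of_le_Fsp (hA : NullSpaceRatioLE A n0 γ) (hγ : 0 < γ)
    (hσ : 0 < σ) (hc : 2 * ((1 + γ) * c) ≤ n0) {s z : Fin m → ℝ} (hsz : A *ᵥ s = A *ᵥ z)
    (hs : (m : ℝ) - c ≤ Fsp γ σ s) (hz : (m : ℝ) - c ≤ Fsp γ σ z) :
    Fsp γ σ z - Fsp γ σ s ≤ gradF γ σ s ⬝ᵥ (z - s) := by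
  refine Fsp_sub_le_gradF_dotProduct hA hγ hσ hsz ?_
  have h1 := card_filter_lt_abs_le hγ hσ s
  have h2 := card_filter_lt_abs_le hγ hσ z
  have h1γ : (0 : ℝ) ≤ 1 + γ := by linarith
  have : ((univ.filter fun i => σ < |s i|) ∪ univ.filter fun i => σ < |z i|).card ≤ (n0 : ℝ) := by
    refine (Nat.cast_le.2 (card_union_le _ _)).trans ?_
    push_cast
    nlinarith [mul_le_mul_of_nonneg_left (show (m : ℝ) - Fsp γ σ s ≤ c by linarith) h1γ,
      mul_le_mul_of_nonneg_left (show (m : ℝ) - Fsp γ σ z ≤ c by linarith) h1γ]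
  rw [filter_or]
  exact_mod_cast this

end SuperlevelSet

theorem stmt_8_general {n m : ℕ} (hnm : n < m) (A : Matrix (Fin n) (Fin m) ℝ)
    (hURP : URP A) (n0 : ℕ) (hn0 : n0 ≤ n)
    (γ : ℝ) (hγ : γ = gammaA A n0) (hγpos : 0 < γ) (hbdd : BddAbove (gammaSet A n0))
    (σ : ℝ) (hσ : 0 < σ) (x : Fin n → ℝ)
    (s0 : Fin m → ℝ) (hs0x : A.mulVec s0 = x)
    (k : ℕ) (hk : k = l0 s0) (hksp : (k : ℝ) ≤ n0 / (2 + 2 * γ))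
    (P : (Fin m → ℝ) →ₗ[ℝ] (Fin m → ℝ))
    (hP1 : ∀ v, A.mulVec (P v) = 0)
    (hP2 : ∀ v, A.mulVec v = 0 → P v = v)
    (hP3 : ∀ v w : Fin m → ℝ, ∑ i, P v i * w i = ∑ i, v i * P w i)
    (shat : Fin m → ℝ) (hshatx : A.mulVec shat = x)
    (hFshat : (m : ℝ) - n0 / (2 + 2 * γ) ≤ Fsp γ σ shat)
    (α : ℝ → Fin m → ℝ) (hα0 : α 0 = shat)
    (hαd : ∀ t : ℝ, 0 ≤ t → HasDerivAt α (P (gradF γ σ (α t))) t) :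
    ∃ sstar : Fin m → ℝ,
      Filter.Tendsto α Filter.atTop (nhds sstar) ∧
      A.mulVec sstar = x ∧
      (∀ s : Fin m → ℝ, A.mulVec s = x → Fsp γ σ s ≤ Fsp γ σ sstar) ∧
      (m : ℝ) - k ≤ Fsp γ σ sstar := by
  have hA : NullSpaceRatioLE A n0 γ := hγ ▸ nullSpaceRatioLE_gammaA hURP hnm.le hn0 hbdd
  set c : ℝ := n0 / (2 + 2 * γ) with hc_def
  have hc : 2 * ((1 + γ) * c) = n0 := by rw [hc_def]; field_simp
  have hs0 : (m : ℝ) - k ≤ Fsp γ σ s0 := hk ▸ sub_l0_le_Fsp hγpos s0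
  set S := {s : Fin m → ℝ | A *ᵥ s = x ∧ (m : ℝ) - c ≤ Fsp γ σ s}
  have hs0S : s0 ∈ S := ⟨hs0x, by linarith⟩
  have hαx (t : ℝ) (ht : 0 ≤ t) : A *ᵥ α t = x := by
    rw [mulVec_eq_of_hasDerivAt hαd (fun t _ => hP1 _) ht, hα0, hshatx]
  have hFα (t : ℝ) (ht : 0 ≤ t) : HasDerivAt (fun t => Fsp γ σ (α t))
      (P (gradF γ σ (α t)) ⬝ᵥ P (gradF γ σ (α t))) t :=
    (hasDerivAt_Fsp_comp hγpos (hαd t ht)).congr_deriv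
      (dotProduct_eq_apply_dotProduct hP2 hP3 _ (hP1 _))
  have hαS (t : ℝ) (ht : 0 ≤ t) : α t ∈ S := ⟨hαx t ht, hFshat.trans <| hα0 ▸
    monotoneOn_Ici_of_hasDerivAt hFα (fun t _ => dotProduct_self_nonneg _) Set.self_mem_Ici ht ht⟩
  obtain ⟨p, ⟨hpx, -⟩, hαp, hpmax⟩ := exists_tendsto_isMaxOn_of_gradient_flow
    (isCompact_setOf_mulVec_eq_and_le_Fsp hA hγpos hσ hs0x (by nlinarith [hk ▸ hksp]))
    (continuous_Fsp hγpos).continuousOn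
    (fun s hs z hz => Fsp_sub_le_gradF_dotProduct_of_le_Fsp hA hγpos hσ hc.le
      (hs.1.trans hz.1.symm) hs.2 hz.2) hαd hFα hαS
    fun t ht z hz => dotProduct_eq_apply_dotProduct hP2 hP3 _ (by
      rw [mulVec_sub, hz.1, hαx t ht, sub_self])
  have hpmax' := isMaxOn_iff.1 hpmax
  refine ⟨p, hαp, hpx, fun s hs => ?_, hs0.trans (hpmax' s0 hs0S)⟩
  by_cases hsS : (m : ℝ) - c ≤ Fsp γ σ s
  · exact hpmax' s ⟨hs, hsS⟩
  · linarith [hpmax' s0 hs0S]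

/-- starting from any point of {As = x} with F_{γ,σ} ≥ m − n0/(2+2γ), the
steepest-ascent trajectory (projected onto the null space of A) converges to a global
maximizer s* of F_{γ,σ} over {As = x}, with F_{γ,σ}(s*) ≥ m − k. -/
theorem stmt_8 {n m : ℕ} (hnm : n < m) (A : Matrix (Fin n) (Fin m) ℝ)
    (hURP : URP A) (n0 : ℕ) (hn1 : 1 ≤ n0) (hn0 : n0 ≤ n)
    (γ : ℝ) (hγ : γ = gammaA A n0) (hγpos : 0 < γ) (hbdd : BddAbove (gammaSet A n0))
    (σ : ℝ) (hσ : 0 < σ) (x : Fin n → ℝ)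
    (s0 : Fin m → ℝ) (hs0x : A.mulVec s0 = x)
    (k : ℕ) (hk : k = l0 s0) (hksp : (k : ℝ) ≤ n0 / (2 + 2 * γ))
    (P : (Fin m → ℝ) →ₗ[ℝ] (Fin m → ℝ))
    (hP1 : ∀ v, A.mulVec (P v) = 0)
    (hP2 : ∀ v, A.mulVec v = 0 → P v = v)
    (hP3 : ∀ v w : Fin m → ℝ, ∑ i, P v i * w i = ∑ i, v i * P w i)
    (shat : Fin m → ℝ) (hshatx : A.mulVec shat = x)
    (hFshat : (m : ℝ) - n0 / (2 + 2 * γ) ≤ Fsp γ σ shat)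
    (α : ℝ → Fin m → ℝ) (hα0 : α 0 = shat)
    (hαd : ∀ t : ℝ, 0 ≤ t → HasDerivAt α (P (gradF γ σ (α t))) t) :
    ∃ sstar : Fin m → ℝ,
      Filter.Tendsto α Filter.atTop (nhds sstar) ∧
      A.mulVec sstar = x ∧
      (∀ s : Fin m → ℝ, A.mulVec s = x → Fsp γ σ s ≤ Fsp γ σ sstar) ∧
      (m : ℝ) - k ≤ Fsp γ σ sstar :=
  stmt_8_general hnm A hURP n0 hn0 γ hγ hγpos hbdd σ hσ x s0 hs0x k hk hksp P hP1 hP2 hP3 shat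
    hshatx hFshat α hα0 hαd
end
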